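/- arXiv:1908.01360 — 9 statements merged into one kernel-verified Lean document; each statement's English description precedes it below -/
import Mathlib

section
/- In any (right) hypergroup over a group M_H, the identity (A7) holds: for every α ∈ H one has o^α = o, i.e. the left neutral element o of Ξ is a fixed point of the action Φ. -/
/-- A (right) hypergroup over the group `H`, with basic set `M`:
structural mappings `Φ` (written `a^α`), `Ψ` (written `ᵃα`), `Ξ` (written `[a,b]`),
`Λ` (written `(a,b)`), satisfying conditions P1)–P4). -/
structure HypergroupOverGroup (M H : Type*) [Group H] where
  Φ : M → H → M
  Ψ : M → H → H
  Ξ : M → M → M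
  Λ : M → M → H
  /-- the left neutral element of `Ξ` -/
  o : M
  P1i : ∀ a b : M, ∃! x : M, Ξ x a = b
  P1ii : ∀ a : M, Ξ o a = a
  P2i : ∀ (a : M) (α β : H), Φ (Φ a α) β = Φ a (α * β)
  P2ii : ∀ a : M, Φ a 1 = a
  P3 : Function.Surjective fun α : H => Ψ o α
  A1 : ∀ (a : M) (α β : H), Ψ a (α * β) = Ψ a α * Ψ (Φ a α) β
  A2 : ∀ (a b : M) (α : H), Φ (Ξ a b) α = Ξ (Φ a (Ψ b α)) (Φ b α)
  A3 : ∀ (a b : M) (α : H),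
    Λ a b * Ψ (Ξ a b) α = Ψ a (Ψ b α) * Λ (Φ a (Ψ b α)) (Φ b α)
  A4 : ∀ a b c : M, Ξ (Ξ a b) c = Ξ (Φ a (Λ b c)) (Ξ b c)
  A5 : ∀ a b c : M,
    Λ a b * Λ (Ξ a b) c = Ψ a (Λ b c) * Λ (Φ a (Λ b c)) (Ξ b c)

/-- (A7): in any hypergroup over the group, `o^α = o` for every `α ∈ H`,
i.e. the left neutral element `o` of `Ξ` is a fixed point of the action `Φ`. -/
theorem hypergroup_A7 {M H : Type*} [Group H] (h : HypergroupOverGroup M H)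
    (α : H) : h.Φ h.o α = h.o := by
  obtain ⟨β, hβ⟩ := h.P3 α
  simp only at hβ
  subst hβ
  have hA2 := h.A2 h.o h.o β
  rw [h.P1ii] at hA2
  have huniq := h.P1i (h.Φ h.o β) (h.Φ h.o β)
  exact huniq.unique hA2.symm (h.P1ii _)
end

section
/- In any (right) hypergroup over a group M_H, the identity (A8) holds: for every α ∈ H one has ᵒα = θ⁻¹·α·θ, where o is the left neutral element of Ξ and θ = Λ(o,o)⁻¹. -/
/-- (A8): in any hypergroup over the group, `ᵒα = θ⁻¹·α·θ` for every `α ∈ H`,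
where `o` is the left neutral element of `Ξ` and `θ = Λ(o,o)⁻¹`. -/
theorem hypergroup_A8 {M H : Type*} [Group H] (h : HypergroupOverGroup M H)
    (θ : H) (hθ : θ = (h.Λ h.o h.o)⁻¹) (α : H) :
    h.Ψ h.o α = θ⁻¹ * α * θ := by
  -- First: Φ o β = o for all β.
  have hΦo : ∀ β : H, h.Φ h.o β = h.o := by
    have key : ∀ γ : H, h.Φ h.o (h.Ψ h.o γ) = h.o := by
      intro γ
      have hA2 := h.A2 h.o h.o γ
      rw [h.P1ii h.o] at hA2
      -- hA2 : Φ o γ = Ξ (Φ o (Ψ o γ)) (Φ o γ)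
      obtain ⟨x, _, huniq⟩ := h.P1i (h.Φ h.o γ) (h.Φ h.o γ)
      have h1 := huniq _ hA2.symm
      have h2 := huniq _ (h.P1ii (h.Φ h.o γ))
      rw [h1, h2]
    intro β
    obtain ⟨γ, hγ⟩ := h.P3 β
    simp only [] at hγ
    rw [← hγ, key]
  obtain ⟨γ, hγ⟩ := h.P3 α
  simp only [] at hγ
  have hA3 := h.A3 h.o h.o γ
  rw [h.P1ii h.o, hΦo, hΦo, hγ] at hA3
  -- hA3 : Λ o o * α = Ψ o α * Λ o o
  subst hθ
  rw [inv_inv]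
  rw [eq_mul_inv_of_mul_eq hA3.symm, mul_assoc]
end

section
/- In any (right) hypergroup over a group M_H, the identity (A9) holds: for every a ∈ M one has Λ(o, a) = θ⁻¹, where o is the left neutral element of Ξ and θ = Λ(o,o)⁻¹. -/
namespace HypergroupOverGroup

variable {M H : Type*} [Group H] (h : HypergroupOverGroup M H)

theorem eq_o_of_Ξ_eq_self {x b : M} (hx : h.Ξ x b = b) : x = h.o :=
  (h.P1i b b).unique hx (h.P1ii b)

theorem Φ_o (β : H) : h.Φ h.o β = h.o := by
  obtain ⟨γ, rfl⟩ := h.P3 β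
  have hA2 := h.A2 h.o h.o γ
  rw [h.P1ii] at hA2
  exact h.eq_o_of_Ξ_eq_self hA2.symm

theorem Ψ_o_eq_conj (β : H) : h.Ψ h.o β = h.Λ h.o h.o * β * (h.Λ h.o h.o)⁻¹ := by
  obtain ⟨γ, rfl⟩ := h.P3 β
  have hA3 := h.A3 h.o h.o γ
  rw [h.P1ii, h.Φ_o, h.Φ_o] at hA3
  exact eq_mul_inv_of_mul_eq hA3.symm

theorem Ψ_o_Λ_o (a : M) : h.Ψ h.o (h.Λ h.o a) = h.Λ h.o h.o := by
  have hA5 := h.A5 h.o h.o a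
  rw [h.P1ii, h.P1ii, h.Φ_o] at hA5
  exact (mul_right_cancel hA5).symm

end HypergroupOverGroup

/-- (A9): in any hypergroup over the group, `Λ(o, a) = θ⁻¹` for every `a ∈ M`,
where `o` is the left neutral element of `Ξ` and `θ = Λ(o,o)⁻¹`. -/
theorem hypergroup_A9 {M H : Type*} [Group H] (h : HypergroupOverGroup M H)
    (θ : H) (hθ : θ = (h.Λ h.o h.o)⁻¹) (a : M) :
    h.Λ h.o a = θ⁻¹ := by
  subst hθ
  have hconj := h.Ψ_o_Λ_o a
  rw [h.Ψ_o_eq_conj, mul_inv_eq_iff_eq_mul, mul_right_inj] at hconj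
  rw [hconj, inv_inv]
end

section
/- In any (right) hypergroup over a group M_H, the identities (A10) and (A11) hold: for every a ∈ M one has [a, o] = a^{θ⁻¹} and (a, o) = ᵃ(θ⁻¹), where o is the left neutral element of Ξ and θ = Λ(o,o)⁻¹. -/
/-- (A10) and (A11): in any hypergroup over the group, `[a, o] = a^{θ⁻¹}` and
`(a, o) = ᵃ(θ⁻¹)` for every `a ∈ M`, where `o` is the left neutral element of `Ξ`
and `θ = Λ(o,o)⁻¹`. -/
theorem hypergroup_A10_A11 {M H : Type*} [Group H] (h : HypergroupOverGroup M H)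
    (θ : H) (hθ : θ = (h.Λ h.o h.o)⁻¹) (a : M) :
    h.Ξ a h.o = h.Φ a θ⁻¹ ∧ h.Λ a h.o = h.Ψ a θ⁻¹ := by
  have hlam : θ⁻¹ = h.Λ h.o h.o := by rw [hθ, inv_inv]
  have hoo : h.Ξ h.o h.o = h.o := h.P1ii h.o
  have h4 := h.A4 a h.o h.o
  rw [hoo] at h4
  have inj : ∀ x y : M, h.Ξ x h.o = h.Ξ y h.o → x = y := by
    intro x y hxy
    obtain ⟨z, _, hu⟩ := h.P1i h.o (h.Ξ y h.o)
    exact (hu x hxy).trans (hu y rfl).symm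
  have hA10 : h.Ξ a h.o = h.Φ a (h.Λ h.o h.o) := inj _ _ h4
  have h5 := h.A5 a h.o h.o
  rw [hoo, hA10] at h5
  have h11 := mul_right_cancel h5
  exact ⟨by rw [hlam, hA10], by rw [hlam, h11]⟩
end

section
/- For the standard construction from a group triple (G, H, M), the identities (A2) and (A3) hold: for all a, b ∈ M and α ∈ H one has [a,b]^α = [a^{ᵇα}, b^α] and (a,b) · ^([a,b])α = ᵃ(ᵇα) · (a^{ᵇα}, b^α). -/
/- Group triple setting: `G` is a group, `H` a subgroup of `G`, `M ⊆ G` a right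
transversal to `H` (every `x ∈ G` has a unique representation `x = α·a` with
`α ∈ H`, `a ∈ M`).  The structural mappings of the standard construction are
determined by `a·α = ᵃα·a^α` (i.e. `Ψ`, `Φ`) and `a·b = (a,b)·[a,b]`
(i.e. `Λ`, `Ξ`); the elements `θ ∈ H`, `o ∈ M` are determined by `ε = θ·o`. -/

/-- (A2) and (A3) for the standard construction from a group triple:
`[a,b]^α = [a^{ᵇα}, b^α]` and `(a,b) · ^([a,b])α = ᵃ(ᵇα) · (a^{ᵇα}, b^α)`. -/
theorem triple_A2_A3 {G : Type*} [Group G] (H : Subgroup G) (M : Set G)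
    (trans : ∀ x : G, ∃! p : H × M, x = (p.1 : G) * (p.2 : G))
    (Φ : M → H → M) (Ψ : M → H → H)
    (hΦΨ : ∀ (a : M) (α : H), (a : G) * (α : G) = (Ψ a α : G) * ((Φ a α : M) : G))
    (Ξ : M → M → M) (Λ : M → M → H)
    (hΞΛ : ∀ a b : M, (a : G) * (b : G) = (Λ a b : G) * ((Ξ a b : M) : G))
    (a b : M) (α : H) :
    Φ (Ξ a b) α = Ξ (Φ a (Ψ b α)) (Φ b α) ∧
    Λ a b * Ψ (Ξ a b) α = Ψ a (Ψ b α) * Λ (Φ a (Ψ b α)) (Φ b α) := by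
  obtain ⟨p, -, hu⟩ := trans ((a : G) * b * α)
  have h1 : ((a : G) * b * α) =
      ((Λ a b * Ψ (Ξ a b) α : H) : G) * ((Φ (Ξ a b) α : M) : G) := by
    rw [hΞΛ a b, mul_assoc, hΦΨ]
    push_cast
    group
  have h2 : ((a : G) * b * α) =
      ((Ψ a (Ψ b α) * Λ (Φ a (Ψ b α)) (Φ b α) : H) : G) *
        ((Ξ (Φ a (Ψ b α)) (Φ b α) : M) : G) := by
    rw [mul_assoc, hΦΨ b α, ← mul_assoc, hΦΨ a (Ψ b α), mul_assoc, hΞΛ]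
    push_cast
    group
  have := (hu (Λ a b * Ψ (Ξ a b) α, Φ (Ξ a b) α) h1).trans
    (hu (Ψ a (Ψ b α) * Λ (Φ a (Ψ b α)) (Φ b α), Ξ (Φ a (Ψ b α)) (Φ b α)) h2).symm
  exact ⟨(Prod.ext_iff.mp this).2, (Prod.ext_iff.mp this).1⟩
end

section
/- For the standard construction from a group triple (G, H, M), the identities (A4) and (A5) hold: for all a, b, c ∈ M one has [[a,b],c] = [a^{(b,c)}, [b,c]] and (a,b)·([a,b],c) = ᵃ(b,c)·(a^{(b,c)}, [b,c]). -/
/- Group triple setting: `G` is a group, `H` a subgroup of `G`, `M ⊆ G` a right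
transversal to `H` (every `x ∈ G` has a unique representation `x = α·a` with
`α ∈ H`, `a ∈ M`).  The structural mappings of the standard construction are
determined by `a·α = ᵃα·a^α` (i.e. `Ψ`, `Φ`) and `a·b = (a,b)·[a,b]`
(i.e. `Λ`, `Ξ`); the elements `θ ∈ H`, `o ∈ M` are determined by `ε = θ·o`. -/

/-- (A4) and (A5) for the standard construction from a group triple:
`[[a,b],c] = [a^{(b,c)}, [b,c]]` and `(a,b)·([a,b],c) = ᵃ(b,c)·(a^{(b,c)}, [b,c])`. -/
theorem triple_A4_A5 {G : Type*} [Group G] (H : Subgroup G) (M : Set G)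
    (trans : ∀ x : G, ∃! p : H × M, x = (p.1 : G) * (p.2 : G))
    (Φ : M → H → M) (Ψ : M → H → H)
    (hΦΨ : ∀ (a : M) (α : H), (a : G) * (α : G) = (Ψ a α : G) * ((Φ a α : M) : G))
    (Ξ : M → M → M) (Λ : M → M → H)
    (hΞΛ : ∀ a b : M, (a : G) * (b : G) = (Λ a b : G) * ((Ξ a b : M) : G))
    (a b c : M) :
    Ξ (Ξ a b) c = Ξ (Φ a (Λ b c)) (Ξ b c) ∧
    Λ a b * Λ (Ξ a b) c = Ψ a (Λ b c) * Λ (Φ a (Λ b c)) (Ξ b c) := by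
  obtain ⟨p, -, hp⟩ := trans ((a : G) * b * c)
  have h1 : ((a : G) * b * c) =
      ((Λ a b * Λ (Ξ a b) c : H) : G) * ((Ξ (Ξ a b) c : M) : G) := by
    rw [hΞΛ a b, mul_assoc, hΞΛ (Ξ a b) c]
    push_cast
    group
  have h2 : ((a : G) * b * c) =
      ((Ψ a (Λ b c) * Λ (Φ a (Λ b c)) (Ξ b c) : H) : G) *
        ((Ξ (Φ a (Λ b c)) (Ξ b c) : M) : G) := by
    rw [mul_assoc, hΞΛ b c, ← mul_assoc, hΦΨ a (Λ b c), mul_assoc,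
      hΞΛ (Φ a (Λ b c)) (Ξ b c)]
    push_cast
    group
  have e1 := hp (Λ a b * Λ (Ξ a b) c, Ξ (Ξ a b) c) h1
  have e2 := hp (Ψ a (Λ b c) * Λ (Φ a (Λ b c)) (Ξ b c), Ξ (Φ a (Λ b c)) (Ξ b c)) h2
  have := e1.trans e2.symm
  exact ⟨congrArg Prod.snd this, congrArg Prod.fst this⟩
end

section
/- (Part of Proposition 4.1) For any (right) hypergroup over a group M_H, the multiplication on the exact product H ⊙ M is associative: (αa · βb) · γc = αa · (βb · γc) for all α, β, γ ∈ H and a, b, c ∈ M. -/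
/-- The multiplication of the exact product `H ⊙ M` associated with a hypergroup
over the group `M_H`, on the set of two-letter words `αa` (encoded as pairs):
`αa · βb = (α · ᵃβ · (a^β, b))[a^β, b]`. -/
def HypergroupOverGroup.emul {M H : Type*} [Group H]
    (h : HypergroupOverGroup M H) : H × M → H × M → H × M :=
  fun p q =>
    (p.1 * h.Ψ p.2 q.1 * h.Λ (h.Φ p.2 q.1) q.2, h.Ξ (h.Φ p.2 q.1) q.2)

/-- (Part of Proposition 4.1) The multiplication of the exact product `H ⊙ M`
is associative: `(αa · βb) · γc = αa · (βb · γc)`. -/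
theorem exactProduct_mul_assoc {M H : Type*} [Group H]
    (h : HypergroupOverGroup M H) (α β γ : H) (a b c : M) :
    h.emul (h.emul (α, a) (β, b)) (γ, c) = h.emul (α, a) (h.emul (β, b) (γ, c)) := by
  simp only [HypergroupOverGroup.emul, Prod.mk.injEq]
  constructor
  · calc α * h.Ψ a β * h.Λ (h.Φ a β) b * h.Ψ (h.Ξ (h.Φ a β) b) γ
          * h.Λ (h.Φ (h.Ξ (h.Φ a β) b) γ) c
        = α * h.Ψ a β * (h.Λ (h.Φ a β) b * h.Ψ (h.Ξ (h.Φ a β) b) γ)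
            * h.Λ (h.Φ (h.Ξ (h.Φ a β) b) γ) c := by group
      _ = α * (h.Ψ a β * h.Ψ (h.Φ a β) (h.Ψ b γ))
            * (h.Λ (h.Φ (h.Φ a β) (h.Ψ b γ)) (h.Φ b γ)
              * h.Λ (h.Ξ (h.Φ (h.Φ a β) (h.Ψ b γ)) (h.Φ b γ)) c) := by
          rw [h.A3, h.A2]; group
      _ = α * h.Ψ a (β * h.Ψ b γ) *
            (h.Ψ (h.Φ a (β * h.Ψ b γ)) (h.Λ (h.Φ b γ) c)
              * h.Λ (h.Φ (h.Φ a (β * h.Ψ b γ)) (h.Λ (h.Φ b γ) c)) (h.Ξ (h.Φ b γ) c)) := by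
          rw [← h.A1, h.P2i, h.A5]
      _ = α * h.Ψ a (β * h.Ψ b γ * h.Λ (h.Φ b γ) c)
            * h.Λ (h.Φ a (β * h.Ψ b γ * h.Λ (h.Φ b γ) c)) (h.Ξ (h.Φ b γ) c) := by
          rw [h.A1 a (β * h.Ψ b γ) (h.Λ (h.Φ b γ) c), h.P2i]; group
      _ = _ := by group
  · rw [h.A2, h.A4, h.P2i, h.P2i, mul_assoc]
end

section
/- (Part of Proposition 4.1) For any (right) hypergroup over a group M_H, the element θo is a left neutral element of the exact product H ⊙ M: θo · αa = αa for all α ∈ H, a ∈ M, where o is the left neutral element of Ξ and θ = Λ(o,o)⁻¹. -/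
namespace HypergroupOverGroup

variable {M H : Type*} [Group H] (h : HypergroupOverGroup M H)

lemma phi_o (α : H) : h.Φ h.o α = h.o := by
  obtain ⟨β, hβ⟩ := h.P3 α
  simp only at hβ
  have key : ∀ γ : H, h.Φ h.o (h.Ψ h.o γ) = h.o := by
    intro γ
    have hA2 := h.A2 h.o h.o γ
    rw [h.P1ii] at hA2
    exact (h.P1i (h.Φ h.o γ) (h.Φ h.o γ)).unique hA2.symm (h.P1ii _)
  rw [← hβ]; exact key β

lemma xi_o_right (a : M) : h.Ξ a h.o = h.Φ a (h.Λ h.o h.o) := by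
  have hA4 := h.A4 a h.o h.o
  rw [h.P1ii] at hA4
  exact (h.P1i h.o (h.Ξ (h.Ξ a h.o) h.o)).unique rfl hA4.symm

lemma phi_lambda_o (a c : M) : h.Φ a (h.Λ h.o c) = h.Φ a (h.Λ h.o h.o) := by
  have hA4 := h.A4 a h.o c
  rw [h.P1ii, h.xi_o_right] at hA4
  exact ((h.P1i c (h.Ξ (h.Φ a (h.Λ h.o h.o)) c)).unique hA4.symm rfl)

lemma psi_lambda_o (a c : M) : h.Ψ a (h.Λ h.o c) = h.Λ a h.o := by
  have hA5 := h.A5 a h.o c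
  rw [h.P1ii, h.xi_o_right, h.phi_lambda_o a c] at hA5
  exact (mul_right_cancel hA5).symm

lemma psi_o_eq (α : H) : h.Ψ h.o α = h.Λ h.o h.o * α * (h.Λ h.o h.o)⁻¹ := by
  obtain ⟨β, hβ⟩ := h.P3 α
  simp only at hβ
  have hA3 := h.A3 h.o h.o β
  rw [h.P1ii, h.phi_o, h.phi_o, hβ] at hA3
  rw [← hβ] at hA3 ⊢
  group
  rw [hA3]
  group

lemma lambda_o_eq (c : M) : h.Λ h.o c = h.Λ h.o h.o := by
  have h1 := h.psi_lambda_o h.o c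
  rw [h.psi_o_eq] at h1
  have : h.Λ h.o h.o * h.Λ h.o c = h.Λ h.o h.o * h.Λ h.o h.o := by
    calc h.Λ h.o h.o * h.Λ h.o c
        = (h.Λ h.o h.o * h.Λ h.o c * (h.Λ h.o h.o)⁻¹) * h.Λ h.o h.o := by group
      _ = h.Λ h.o h.o * h.Λ h.o h.o := by rw [h1]
  exact mul_left_cancel this

end HypergroupOverGroup

/-- (Part of Proposition 4.1) The word `θo` is a left neutral element of the
exact product `H ⊙ M`: `θo · αa = αa`, where `o` is the left neutral element
of `Ξ` and `θ = Λ(o,o)⁻¹`. -/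

theorem exactProduct_left_neutral {M H : Type*} [Group H]
    (h : HypergroupOverGroup M H) (θ : H) (hθ : θ = (h.Λ h.o h.o)⁻¹)
    (α : H) (a : M) :
    h.emul (θ, h.o) (α, a) = (α, a) := by
  simp only [HypergroupOverGroup.emul, h.phi_o, h.P1ii, h.psi_o_eq, h.lambda_o_eq, hθ,
    Prod.mk.injEq]
  constructor
  · group
  · trivial
end

section
/- (Part of Proposition 4.1) For any (right) hypergroup over a group M_H and any elements α, β ∈ H, a, b ∈ M, there exists a unique pair ξ ∈ H, x ∈ M with ξx · αa = βb in the exact product H ⊙ M; explicitly, x = (b/a)^{α⁻¹} and ξ = β · (ˣα · (b/a, a))⁻¹, where b/a denotes the unique solution y ∈ M of the equation [y, a] = b. -/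
/-- (Part of Proposition 4.1) For any `α, β ∈ H`, `a, b ∈ M` there exists a
unique word `ξx` with `ξx · αa = βb` in the exact product `H ⊙ M`; explicitly
`x = (b/a)^{α⁻¹}` and `ξ = β · (ˣα · (b/a, a))⁻¹`, where `b/a = d` is the
unique solution of `[y, a] = b`. -/
theorem exactProduct_unique_left_division {M H : Type*} [Group H]
    (h : HypergroupOverGroup M H) (α β : H) (a b : M)
    (d : M) (hd : h.Ξ d a = b) :
    (∃! p : H × M, h.emul p (α, a) = (β, b)) ∧
    h.emul (β * (h.Ψ (h.Φ d α⁻¹) α * h.Λ d a)⁻¹, h.Φ d α⁻¹) (α, a) = (β, b) := by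
  have key : h.emul (β * (h.Ψ (h.Φ d α⁻¹) α * h.Λ d a)⁻¹, h.Φ d α⁻¹) (α, a) = (β, b) := by
    have hΦ : h.Φ (h.Φ d α⁻¹) α = d := by
      rw [h.P2i, inv_mul_cancel, h.P2ii]
    simp only [HypergroupOverGroup.emul, hΦ, hd]
    refine Prod.ext ?_ rfl
    group
  refine ⟨⟨(β * (h.Ψ (h.Φ d α⁻¹) α * h.Λ d a)⁻¹, h.Φ d α⁻¹), key, ?_⟩, key⟩
  rintro ⟨ξ, x⟩ hx
  simp only [HypergroupOverGroup.emul, Prod.mk.injEq] at hx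
  obtain ⟨h1, h2⟩ := hx
  have hxd : h.Φ x α = d := (h.P1i a b).unique h2 hd
  have hx2 : x = h.Φ d α⁻¹ := by rw [← hxd, h.P2i, mul_inv_cancel, h.P2ii]
  subst hx2
  rw [hxd] at h1
  refine Prod.ext ?_ rfl
  simp only
  rw [← h1]
  group
end
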